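/- arXiv:2006.15024 — 5 statements merged into one kernel-verified Lean document; each statement's English description precedes it below -/
import Mathlib

section
/- Let b be an s-t bridge of G and let e be any other s-t bridge of G. Then in G with b removed, e's endpoints satisfy exactly one of: the tail of e is reachable from s, or t is reachable from the head of e. In particular, e is either 'before' b (head of e reaches s-side) or 'after' b, but not both. -/
variable {V : Type*}

/-- Reachability via directed edges of relation `E`. -/
def reaches (E : V → V → Prop) : V → V → Prop := Relation.ReflTransGen E

/-- The graph with the single edge `e` deleted. -/
def eraseEdge (E : V → V → Prop) (e : V × V) : V → V → Prop :=
  fun a b => E a b ∧ (a, b) ≠ e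

/-- `e` is an `s`-`t` bridge: it is an edge and its removal destroys all `s`-`t` paths. -/
def IsBridge (E : V → V → Prop) (s t : V) (e : V × V) : Prop :=
  E e.1 e.2 ∧ ¬ reaches (eraseEdge E e) s t

/-- A directed walk from `s` to `t` whose successive vertices after `s` are `p`. -/
def IsWalk (E : V → V → Prop) (s t : V) (p : List V) : Prop :=
  List.Chain E s p ∧ (s :: p).getLast (List.cons_ne_nil s p) = t

/-- The list of edges of the walk `s :: p`. -/
def edgesOf (s : V) (p : List V) : List (V × V) := (s :: p).zip p

/-!
If `e` and `b` are distinct `s`-`t` bridges, a path `s ⇝ e.1`, the edge `e` and a path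
`e.2 ⇝ t` avoiding `b` would join `s` to `t` in `G \ b`, so at most one alternative holds.
Conversely, in `G \ b` the vertex `s` reaches `b.1` and `b.2` reaches `t`. If neither
alternative held, these two paths could not pass through `e`, so together with `b` they
would join `s` to `t` in `G \ e`.
-/

namespace Bridges

variable {E : V → V → Prop} {x : V × V} {u v : V}

theorem reaches_of_isWalk {s t : V} {p : List V} (h : IsWalk E s t p) : reaches E s t :=
  List.relationReflTransGen_of_exists_isChain_cons p h.1 h.2

theorem reaches_mono {F : V → V → Prop} (hEF : ∀ a c, E a c → F a c) (h : reaches E u v) :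
    reaches F u v :=
  Relation.ReflTransGen.mono hEF _ _ h

theorem reaches_of_reaches_eraseEdge (h : reaches (eraseEdge E x) u v) : reaches E u v :=
  reaches_mono (fun _ _ hac => hac.1) h

theorem reaches_eraseEdge_of_ne {y : V × V} (hy : E y.1 y.2) (hne : y ≠ x) :
    reaches (eraseEdge E x) y.1 y.2 :=
  Relation.ReflTransGen.single ⟨hy, hne⟩

/-- If deleting `x` cuts `u` from `v`, then `x.1` is still reachable from `u` without `x`:
follow a `u`-`v` path up to its first use of `x`. -/
theorem reaches_eraseEdge_fst (h : reaches E u v) (hx : ¬ reaches (eraseEdge E x) u v) :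
    reaches (eraseEdge E x) u x.1 := by
  induction h using Relation.ReflTransGen.head_induction_on with
  | refl => exact absurd Relation.ReflTransGen.refl hx
  | @head a c hac _ ih =>
    by_cases hac_x : (a, c) = x
    · subst hac_x
      exact Relation.ReflTransGen.refl
    · exact (ih fun hcv => hx (hcv.head ⟨hac, hac_x⟩)).head ⟨hac, hac_x⟩

theorem reaches_eraseEdge_snd (h : reaches E u v) (hx : ¬ reaches (eraseEdge E x) u v) :
    reaches (eraseEdge E x) x.2 v := by
  induction h with
  | refl => exact absurd Relation.ReflTransGen.refl hx
  | @tail c d _ hcd ih =>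
    by_cases hcd_x : (c, d) = x
    · subst hcd_x
      exact Relation.ReflTransGen.refl
    · exact (ih fun huc => hx (huc.tail ⟨hcd, hcd_x⟩)).tail ⟨hcd, hcd_x⟩

theorem reaches_eraseEdge_of_not_reaches_fst (h : reaches E u v) (hx : ¬ reaches E u x.1) :
    reaches (eraseEdge E x) u v := by
  by_contra hcut
  exact hx (reaches_of_reaches_eraseEdge (reaches_eraseEdge_fst h hcut))

theorem reaches_eraseEdge_of_not_reaches_snd (h : reaches E u v) (hx : ¬ reaches E x.2 v) :
    reaches (eraseEdge E x) u v := by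
  by_contra hcut
  exact hx (reaches_of_reaches_eraseEdge (reaches_eraseEdge_snd h hcut))

theorem not_reaches_fst_and_reaches_snd {s t : V} {b e : V × V} (hb : IsBridge E s t b)
    (he : E e.1 e.2) (hne : e ≠ b) :
    ¬ (reaches (eraseEdge E b) s e.1 ∧ reaches (eraseEdge E b) e.2 t) := fun ⟨hse, het⟩ =>
  hb.2 ((hse.trans (reaches_eraseEdge_of_ne he hne)).trans het)

theorem reaches_fst_or_reaches_snd {s t : V} {b e : V × V} (hst : reaches E s t)
    (hb : IsBridge E s t b) (he : IsBridge E s t e) (hne : e ≠ b) :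
    reaches (eraseEdge E b) s e.1 ∨ reaches (eraseEdge E b) e.2 t := by
  by_contra! ⟨hse, het⟩
  have hsb : reaches (eraseEdge (eraseEdge E b) e) s b.1 :=
    reaches_eraseEdge_of_not_reaches_fst (reaches_eraseEdge_fst hst hb.2) hse
  have hbt : reaches (eraseEdge (eraseEdge E b) e) b.2 t :=
    reaches_eraseEdge_of_not_reaches_snd (reaches_eraseEdge_snd hst hb.2) het
  have hmono : ∀ a c, eraseEdge (eraseEdge E b) e a c → eraseEdge E e a c :=
    fun _ _ hac => ⟨hac.1.1, hac.2⟩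
  exact he.2 (((reaches_mono hmono hsb).trans (reaches_eraseEdge_of_ne hb.1 hne.symm)).trans
    (reaches_mono hmono hbt))

end Bridges

open Bridges in
/-- for distinct bridges b, e, in G \ b exactly one of
 and  holds. -/
theorem stmt1 (E : V → V → Prop) (s t : V) (b e : V × V)
    (hpath : ∃ p : List V, IsWalk E s t p)
    (hb : IsBridge E s t b) (he : IsBridge E s t e) (hne : e ≠ b) :
    Xor' (reaches (eraseEdge E b) s e.1) (reaches (eraseEdge E b) e.2 t) := by
  obtain ⟨p, hp⟩ := hpath
  exact (xor_iff_or_and_not_and _ _).2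
    ⟨reaches_fst_or_reaches_snd (reaches_of_isWalk hp) hb he hne,
      not_reaches_fst_and_reaches_snd hb he.1 hne⟩
end

section
/- A vertex v (distinct from s and t) is an s-t articulation point of G if and only if the internal edge (v_in, v_out) is an s-t bridge in the split graph G' obtained by splitting every vertex. -/
variable {V : Type*}

/-- The graph with vertex `v` (and all incident edges) deleted. -/
def eraseVertex (E : V → V → Prop) (v : V) : V → V → Prop :=
  fun a b => E a b ∧ a ≠ v ∧ b ≠ v

/-- `v` is an `s`-`t` articulation point. -/
def IsArtic (E : V → V → Prop) (s t v : V) : Prop :=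
  v ≠ s ∧ v ≠ t ∧ ¬ reaches (eraseVertex E v) s t

/-- The split graph: each vertex x becomes x_in = (x, false) and x_out = (x, true),
with internal edge (x_in, x_out); each edge (u,v) becomes (u_out, v_in). -/
def splitE (E : V → V → Prop) : (V × Bool) → (V × Bool) → Prop :=
  fun a b => (a.2 = true ∧ b.2 = false ∧ E a.1 b.1) ∨ (a.1 = b.1 ∧ a.2 = false ∧ b.2 = true)

/-- v is an s-t articulation point of G iff its internal edge is an
s-t bridge of the split graph (from s_in to t_out). -/
theorem stmt4 (E : V → V → Prop) (s t v : V) (hvs : v ≠ s) (hvt : v ≠ t) :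
    IsArtic E s t v ↔
      IsBridge (splitE E) (s, false) (t, true) ((v, false), (v, true)) := by
  constructor
  · rintro ⟨-, -, hnr⟩
    refine ⟨Or.inr ⟨rfl, rfl, rfl⟩, fun hr => hnr ?_⟩
    have key : ∀ a : V × Bool,
        Relation.ReflTransGen (eraseEdge (splitE E) ((v,false),(v,true))) a (t, true) →
        (a.2 = true → a.1 ≠ v → reaches (eraseVertex E v) a.1 t) ∧
        (a.2 = false → a.1 ≠ v ∧ reaches (eraseVertex E v) a.1 t) := by
      intro a h
      induction h using Relation.ReflTransGen.head_induction_on with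
      | refl => exact ⟨fun _ _ => Relation.ReflTransGen.refl, fun h => by simp at h⟩
      | @head a c hab hcb ih =>
        obtain ⟨hsp, hne⟩ := hab
        rcases hsp with ⟨h2, h2', hE⟩ | ⟨heq, h2, h2'⟩
        · refine ⟨fun _ hxv => ?_, fun hf => by rw [hf] at h2; exact absurd h2 (by simp)⟩
          obtain ⟨hbv, hRb⟩ := ih.2 h2'
          exact Relation.ReflTransGen.head ⟨hE, hxv, hbv⟩ hRb
        · refine ⟨fun ht => by rw [ht] at h2; exact absurd h2 (by simp), fun _ => ?_⟩
          have hav : a.1 ≠ v := fun hv => hne (by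
            have ha : a = (v, false) := Prod.ext hv h2
            have hb : c = (v, true) := Prod.ext (heq ▸ hv) h2'
            rw [ha, hb])
          have := ih.1 h2' (heq ▸ hav)
          exact ⟨hav, heq ▸ this⟩
    exact (key (s, false) hr).2 rfl |>.2
  · rintro ⟨-, hnr⟩
    refine ⟨hvs, hvt, fun hr => hnr ?_⟩
    have key : ∀ b, reaches (eraseVertex E v) s b →
        Relation.ReflTransGen (eraseEdge (splitE E) ((v,false),(v,true))) (s, false) (b, true) := by
      intro b h
      induction h with
      | refl =>
        refine Relation.ReflTransGen.single ⟨Or.inr ⟨rfl, rfl, rfl⟩, fun he => ?_⟩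
        simp only [Prod.mk.injEq] at he
        exact hvs he.1.1.symm
      | @tail b c hsb hbc ih =>
        obtain ⟨hE, hbv, hcv⟩ := hbc
        have step1 : Relation.ReflTransGen (eraseEdge (splitE E) ((v,false),(v,true)))
            (s, false) (c, false) := ih.tail ⟨Or.inl ⟨rfl, rfl, hE⟩, by simp⟩
        refine step1.tail ⟨Or.inr ⟨rfl, rfl, rfl⟩, fun he => ?_⟩
        simp only [Prod.mk.injEq] at he
        exact hcv he.1.1
    exact key t hr
end

section
/- Let P be a fixed directed s-t path in G and let G' be the graph obtained from G by removing the edges of P and adding the reverse of each edge of P. If e = (u,v) is an edge of P that is NOT an s-t bridge of G, and u is reachable from s in G', then v is reachable from s in G'. -/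
/-!
Let `R` be the set of vertices reachable from `s` in `G'`. Since every edge of `P` is reversed
in `G'`, `R` is closed under taking predecessors along `P`. Hence, if `u ∈ R` but `v ∉ R`, the
walk `P` leaves `R` exactly once, through `e = (u, v)`, and `t ∉ R`. As `e` is not a bridge,
some `s`-`t` walk of `G` avoids `e`; it must leave `R` through an edge, which cannot be an edge
of `G'` and so is an edge of `P` other than `e`: a contradiction.
-/

variable {V : Type*}

/-- The transformed graph `(G \ P) ∪ P⁻¹`: edges of the walk `s :: p` are reversed. -/
def transE (E : V → V → Prop) (s : V) (p : List V) : V → V → Prop :=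
  fun a b => (E a b ∧ (a, b) ∉ edgesOf s p) ∨ (b, a) ∈ edgesOf s p

lemma edgesOf_cons (s c : V) (q : List V) : edgesOf s (c :: q) = (s, c) :: edgesOf c q := rfl

lemma fst_mem_of_mem_edgesOf {s a b : V} {p : List V} (h : (a, b) ∈ edgesOf s p) :
    a ∈ s :: p :=
  (List.of_mem_zip h).1

lemma snd_mem_of_mem_edgesOf {s a b : V} {p : List V} (h : (a, b) ∈ edgesOf s p) :
    b ∈ s :: p :=
  List.mem_cons_of_mem s (List.of_mem_zip h).2

lemma rel_of_mem_edgesOf {E : V → V → Prop} {s a b : V} {p : List V}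
    (hp : List.IsChain E (s :: p)) (h : (a, b) ∈ edgesOf s p) : E a b := by
  induction p generalizing s with
  | nil => simp [edgesOf] at h
  | cons c q ih =>
    obtain ⟨hsc, hq⟩ := List.isChain_cons_cons.mp hp
    rcases List.mem_cons.mp h with h | h
    · obtain ⟨rfl, rfl⟩ := Prod.mk.inj h
      exact hsc
    · exact ih hq h

def PredClosedAlong (R : V → Prop) (s : V) (p : List V) : Prop :=
  ∀ a b, (a, b) ∈ edgesOf s p → R b → R a

namespace PredClosedAlong

variable {R : V → Prop}

lemma tail {s c : V} {q : List V} (hR : PredClosedAlong R s (c :: q)) :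
    PredClosedAlong R c q :=
  fun a b h => hR a b (by simp [edgesOf_cons, h])

lemma rel_head {s x : V} {p : List V} (hR : PredClosedAlong R s p)
    (hx : x ∈ s :: p) (hRx : R x) : R s := by
  induction p generalizing s with
  | nil => rwa [List.mem_singleton.mp hx] at hRx
  | cons c q ih =>
    rcases List.mem_cons.mp hx with rfl | hx
    · exact hRx
    · exact hR s c (by simp [edgesOf_cons]) (ih hR.tail hx)

lemma rel_of_rel_getLast {s x : V} {p : List V} (hR : PredClosedAlong R s p)
    (hlast : R ((s :: p).getLast (List.cons_ne_nil s p))) (hx : x ∈ s :: p) : R x := by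
  induction p generalizing s x with
  | nil => rwa [List.mem_singleton.mp hx]
  | cons c q ih =>
    rw [List.getLast_cons_cons] at hlast
    have hRc : ∀ y ∈ c :: q, R y := fun y hy => ih hR.tail hlast hy
    rcases List.mem_cons.mp hx with rfl | hx
    · exact hR x c (by simp [edgesOf_cons]) (hRc c List.mem_cons_self)
    · exact hRc x hx

lemma eq_of_exit {s : V} {p : List V} (hR : PredClosedAlong R s p)
    {e f : V × V} (he : e ∈ edgesOf s p) (hf : f ∈ edgesOf s p)
    (he_exit : R e.1 ∧ ¬ R e.2) (hf_exit : R f.1 ∧ ¬ R f.2) : e = f := by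
  induction p generalizing s with
  | nil => simp [edgesOf] at he
  | cons c q ih =>
    have rel_of_tail_edge : ∀ g ∈ edgesOf c q, R g.1 → R c := fun g hg hg1 =>
      hR.tail.rel_head (fst_mem_of_mem_edgesOf hg) hg1
    rcases List.mem_cons.mp he with rfl | he <;> rcases List.mem_cons.mp hf with rfl | hf
    · rfl
    · exact absurd (rel_of_tail_edge f hf hf_exit.1) he_exit.2
    · exact absurd (rel_of_tail_edge e he he_exit.1) hf_exit.2
    · exact ih hR.tail he hf

end PredClosedAlong

lemma exists_rel_exit_of_reflTransGen {r : V → V → Prop} (R : V → Prop) {s t : V}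
    (hs : R s) (ht : ¬ R t) (h : Relation.ReflTransGen r s t) :
    ∃ a b, r a b ∧ R a ∧ ¬ R b := by
  induction h using Relation.ReflTransGen.head_induction_on with
  | refl => exact absurd hs ht
  | @head a b hab _ ih =>
    by_cases hb : R b
    · exact ih hb
    · exact ⟨a, b, hab, hs, hb⟩

/-- if e = (u,v) is a non-bridge edge of P and u is reachable from s
in the transformed graph, then so is v. -/
theorem stmt5 (E : V → V → Prop) (s t : V) (p : List V) (hp : IsWalk E s t p)
    (e : V × V) (he : e ∈ edgesOf s p) (hnb : ¬ IsBridge E s t e)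
    (hu : reaches (transE E s p) s e.1) :
    reaches (transE E s p) s e.2 := by
  by_contra hv
  set R : V → Prop := reaches (transE E s p) s
  have hR : PredClosedAlong R s p :=
    fun a b hab hb => Relation.ReflTransGen.tail hb (Or.inr hab)
  have ht : ¬ R t := fun hRt =>
    hv (hR.rel_of_rel_getLast (hp.2 ▸ hRt) (snd_mem_of_mem_edgesOf he))
  have havoid : reaches (eraseEdge E e) s t :=
    not_not.mp fun h => hnb ⟨rel_of_mem_edgesOf hp.1 he, h⟩
  obtain ⟨a, b, ⟨hab, hne⟩, hRa, hRb⟩ :=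
    exists_rel_exit_of_reflTransGen R Relation.ReflTransGen.refl ht havoid
  have hmem : (a, b) ∈ edgesOf s p := by
    by_contra h
    exact hRb (Relation.ReflTransGen.tail hRa (Or.inl ⟨hab, h⟩))
  exact hne (hR.eq_of_exit hmem he ⟨hRa, hRb⟩ ⟨hu, hv⟩)
end

section
/- With bridges b1,...,bk in order and R_i the set of vertices reachable from s in G \ b_i, the tail of b_i belongs to R_i and the head of b_i does not belong to R_i, for each i. -/
/-!
The prefix of an `s`-walk in `G` up to its first use of `b` is an `s`-walk in `G \ b` ending at
the tail of `b`; so if that tail were unreachable in `G \ b`, no `s`-walk would use `b` and `t`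
would stay reachable. Dually, if the head of `b` were reachable in `G \ b`, every use of `b`
could be bypassed.
-/

variable {V : Type*}

theorem reaches_eraseEdge_or_reaches_eraseEdge_fst {E : V → V → Prop} {s x : V}
    (e : V × V) (h : reaches E s x) :
    reaches (eraseEdge E e) s x ∨ reaches (eraseEdge E e) s e.1 := by
  induction h with
  | refl => exact Or.inl .refl
  | @tail u v _ huv ih =>
    refine ih.elim (fun hu => ?_) Or.inr
    by_cases huv_eq : (u, v) = e
    · exact Or.inr (huv_eq ▸ hu)
    · exact Or.inl (hu.tail ⟨huv, huv_eq⟩)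

theorem reaches_eraseEdge_of_reaches_eraseEdge_snd {E : V → V → Prop} {s x : V}
    {e : V × V} (he : reaches (eraseEdge E e) s e.2) (h : reaches E s x) :
    reaches (eraseEdge E e) s x := by
  induction h with
  | refl => exact .refl
  | @tail u v _ huv ih =>
    by_cases huv_eq : (u, v) = e
    · exact huv_eq ▸ he
    · exact ih.tail ⟨huv, huv_eq⟩

namespace IsBridge

variable {E : V → V → Prop} {s t : V} {e : V × V}

theorem reaches_eraseEdge_fst (hb : IsBridge E s t e) (hst : reaches E s t) :
    reaches (eraseEdge E e) s e.1 :=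
  (reaches_eraseEdge_or_reaches_eraseEdge_fst e hst).resolve_left hb.2

theorem not_reaches_eraseEdge_snd (hb : IsBridge E s t e) (hst : reaches E s t) :
    ¬ reaches (eraseEdge E e) s e.2 :=
  fun he => hb.2 (reaches_eraseEdge_of_reaches_eraseEdge_snd he hst)

end IsBridge

theorem stmt15_general (E : V → V → Prop) (s t : V) (hst : reaches E s t)
    (B : List (V × V))
    (hB : ∀ e : V × V, IsBridge E s t e ↔ e ∈ B) :
    ∀ i : ℕ, (hi : i < B.length) →
      reaches (eraseEdge E (B.get ⟨i, hi⟩)) s (B.get ⟨i, hi⟩).1 ∧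
        ¬ reaches (eraseEdge E (B.get ⟨i, hi⟩)) s (B.get ⟨i, hi⟩).2 := by
  intro i hi
  have hb : IsBridge E s t (B.get ⟨i, hi⟩) := (hB _).mpr (B.get_mem _)
  exact ⟨hb.reaches_eraseEdge_fst hst, hb.not_reaches_eraseEdge_snd hst⟩

/-- the tail of each bridge b_i lies in R_i and its head does not. -/
theorem stmt15 (E : V → V → Prop) (s t : V) (hst : reaches E s t)
    (B : List (V × V)) (hnd : B.Nodup)
    (hB : ∀ e : V × V, IsBridge E s t e ↔ e ∈ B)
    (horder : ∀ p : List V, IsWalk E s t p → B.Sublist (edgesOf s p)) :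
    ∀ i : ℕ, (hi : i < B.length) →
      reaches (eraseEdge E (B.get ⟨i, hi⟩)) s (B.get ⟨i, hi⟩).1 ∧
        ¬ reaches (eraseEdge E (B.get ⟨i, hi⟩)) s (B.get ⟨i, hi⟩).2 :=
  stmt15_general E s t hst B hB
end

section
/- Every s-t path of G enters the bridge component C_i at the unique vertex head(b_{i-1}) (or s for i=1): i.e., the first vertex of C_i visited by any s-t path is head(b_{i-1}). -/
variable {V : Type*}

/-- R_i: vertices reachable from s in G \ b_i (for i < k), and all vertices
reachable from s in G for i = k. -/
def Rset (E : V → V → Prop) (s : V) (B : List (V × V)) (i : ℕ) (v : V) : Prop :=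
  if h : i < B.length then reaches (eraseEdge E (B.get ⟨i, h⟩)) s v else reaches E s v

/-- The bridge components: C_0 = R_0 and C_i = R_i \ R_{i-1} for i ≥ 1. -/
def Comp (E : V → V → Prop) (s : V) (B : List (V × V)) (i : ℕ) (v : V) : Prop :=
  Rset E s B i v ∧ (i = 0 ∨ ¬ Rset E s B (i - 1) v)

/-
Let `b` be the bridge `B[i-1]` and cut the walk at its first traversal of `b`. Every vertex before
the cut is reached from `s` by the walk itself without using `b`, so it lies in `R_{i-1}`. The head
`b.2` does not: the part of any `s`–`t` walk after its last traversal of `b` leads from `b.2` to `t`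
avoiding `b`, so `b` would not be a bridge. And `b.2 ∈ R_i`, because the walk up to `b.2` does not
use the next bridge `c = B[i]` (when there is one): if it did, cutting out everything between the
first and the last traversal of `c` would leave an `s`–`t` walk that uses `c` once and `b` only
after `c`, against the common order of the bridges.
-/

namespace List

variable {α : Type*}

@[simp]
theorem consecutivePairs_nil : ([] : List α).consecutivePairs = [] := rfl

@[simp]
theorem consecutivePairs_singleton (a : α) : [a].consecutivePairs = [] := rfl

@[simp]
theorem consecutivePairs_cons_cons (a b : α) (l : List α) :
    (a :: b :: l).consecutivePairs = (a, b) :: (b :: l).consecutivePairs := rfl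

theorem consecutivePairs_append_cons_cons (u : List α) (a b : α) (v : List α) :
    (u ++ a :: b :: v).consecutivePairs
      = (u ++ [a]).consecutivePairs ++ (a, b) :: (b :: v).consecutivePairs := by
  induction u using twoStepInduction with
  | nil => rfl
  | singleton x => rfl
  | cons_cons x y u _ ih => exact congrArg _ (ih y)

theorem isChain_iff_forall_mem_consecutivePairs {R : α → α → Prop} {l : List α} :
    l.IsChain R ↔ ∀ x ∈ l.consecutivePairs, R x.1 x.2 := by
  induction l using twoStepInduction with
  | nil => simp
  | singleton x => simp
  | cons_cons x y l _ ih => simp [ih]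

theorem exists_eq_append_cons_cons_of_consecutivePairs_eq {e : α × α} {l : List α}
    {L₁ L₂ : List (α × α)} (h : l.consecutivePairs = L₁ ++ e :: L₂) :
    ∃ u v, l = u ++ e.1 :: e.2 :: v ∧ (u ++ [e.1]).consecutivePairs = L₁ ∧
      (e.2 :: v).consecutivePairs = L₂ := by
  induction L₁ generalizing l with
  | nil =>
    obtain _ | ⟨x, _ | ⟨y, l⟩⟩ := l <;> simp only [consecutivePairs_nil,
      consecutivePairs_singleton, consecutivePairs_cons_cons, nil_append, cons.injEq,
      reduceCtorEq] at h
    obtain ⟨rfl, rfl⟩ := h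
    exact ⟨[], l, rfl, rfl, rfl⟩
  | cons f L₁ ih =>
    obtain _ | ⟨x, _ | ⟨y, l⟩⟩ := l <;> simp only [consecutivePairs_nil,
      consecutivePairs_singleton, consecutivePairs_cons_cons, cons_append, cons.injEq,
      reduceCtorEq] at h
    obtain ⟨rfl, h⟩ := h
    obtain ⟨u, v, hl, rfl, rfl⟩ := ih h
    refine ⟨x :: u, v, by rw [hl, cons_append], ?_, rfl⟩
    cases u with
    | nil => obtain ⟨rfl, -⟩ := List.cons.inj hl; rfl
    | cons z u => obtain ⟨rfl, -⟩ := List.cons.inj hl; rfl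

theorem exists_eq_append_cons_notMem_left {a : α} {l : List α} (h : a ∈ l) :
    ∃ l₁ l₂, a ∉ l₁ ∧ l = l₁ ++ a :: l₂ := by
  classical
  obtain ⟨l₁, l₂, h₁, h₂, -⟩ := exists_erase_eq h
  exact ⟨l₁, l₂, h₁, h₂⟩

theorem exists_eq_append_cons_notMem_right {a : α} {l : List α} (h : a ∈ l) :
    ∃ l₁ l₂, a ∉ l₂ ∧ l = l₁ ++ a :: l₂ := by
  obtain ⟨l₁, l₂, h₁, h₂⟩ := exists_eq_append_cons_notMem_left (mem_reverse.2 h)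
  refine ⟨l₂.reverse, l₁.reverse, by simpa using h₁, ?_⟩
  simpa using congrArg reverse h₂

theorem mem_of_pair_sublist_append_cons {a b : α} {l₁ l₂ : List α}
    (h : [a, b] <+ l₁ ++ a :: l₂) (ha : a ∉ l₁) : b ∈ l₂ := by
  obtain ⟨_ | ⟨x, r₁⟩, r₂, hr, h₁, h₂⟩ := sublist_append_iff.1 h
  · rw [nil_append] at hr
    subst hr
    simpa using h₂
  · obtain ⟨rfl, -⟩ := cons.inj hr
    exact absurd (h₁.subset mem_cons_self) ha

theorem getElem_pair_sublist {l : List α} {i : ℕ} (h : i + 1 < l.length) :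
    [l[i], l[i + 1]] <+ l := by
  have h' := drop_sublist i l
  rw [drop_eq_getElem_cons (by omega), drop_eq_getElem_cons h] at h'
  exact (cons_sublist_cons.2 (cons_sublist_cons.2 (nil_sublist _))).trans h'

theorem IsChain.splice {R : α → α → Prop} {l₁ r₁ l₂ r₂ : List α} {a : α}
    (h₁ : (l₁ ++ a :: r₁).IsChain R) (h₂ : (l₂ ++ a :: r₂).IsChain R) :
    (l₁ ++ a :: r₂).IsChain R :=
  isChain_split.2 ⟨(isChain_split.1 h₁).1, (isChain_split.1 h₂).2⟩

theorem IsChain.reflTransGen_of_mem {R : α → α → Prop} {l : List α} {a x : α}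
    (h : l.IsChain R) (ha : a ∈ l.head?) (hx : x ∈ l) : Relation.ReflTransGen R a x :=
  h.induction _ l (fun _ _ hr hx => hx.tail hr)
    (fun hne => by rw [head?_eq_some_head hne, Option.mem_some_iff] at ha; rw [ha]) x hx

theorem getElem_eq_of_eq_append_cons_of_first {P : α → Prop} {l u v : List α} {y : α}
    (hl : l = u ++ y :: v) (hu : ∀ x ∈ u, ¬ P x) (hy : P y) {j : ℕ} (hj : j < l.length)
    (hPj : P l[j]) (hmin : ∀ j' (hj' : j' < j), ¬ P (l[j']'(hj'.trans hj))) : l[j] = y := by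
  subst hl
  rcases lt_trichotomy j u.length with hlt | rfl | hgt
  · rw [getElem_append_left hlt] at hPj
    exact absurd hPj (hu _ (getElem_mem hlt))
  · simp
  · exact absurd (by simpa using hy) (hmin u.length hgt)

end List

section

variable {E : V → V → Prop} {s t : V} {B : List (V × V)}

theorem edgesOf_eq_consecutivePairs (s : V) (p : List V) :
    edgesOf s p = (s :: p).consecutivePairs := rfl

theorem isWalk_iff {p : List V} :
    IsWalk E s t p ↔ (s :: p).IsChain E ∧ (s :: p).getLast? = some t := by
  rw [List.getLast?_eq_some_getLast (List.cons_ne_nil s p), Option.some_inj]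
  rfl

theorem reaches_of_isWalk {p : List V} (hp : IsWalk E s t p) : reaches E s t :=
  List.relationReflTransGen_of_exists_isChain_cons p hp.1 hp.2

theorem exists_isWalk_of_reaches (h : reaches E s t) : ∃ p, IsWalk E s t p :=
  List.exists_isChain_cons_of_relationReflTransGen h

theorem isChain_eraseEdge_iff {e : V × V} {l : List V} :
    l.IsChain (eraseEdge E e) ↔ l.IsChain E ∧ e ∉ l.consecutivePairs := by
  simp only [List.isChain_iff_forall_mem_consecutivePairs, eraseEdge]
  grind

theorem IsBridge.mem_edgesOf {e : V × V} {p : List V} (he : IsBridge E s t e)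
    (hp : IsWalk E s t p) : e ∈ edgesOf s p := by
  by_contra hnot
  exact he.2 (reaches_of_isWalk ⟨isChain_eraseEdge_iff.2 ⟨hp.1, hnot⟩, hp.2⟩)

theorem IsWalk.reaches_eraseEdge_of_mem_prefix {p l r : List V} {e : V × V} {x : V}
    (hp : IsWalk E s t p) (h : s :: p = l ++ r) (he : e ∉ l.consecutivePairs) (hx : x ∈ l) :
    reaches (eraseEdge E e) s x := by
  have hl : l.IsChain E := (h ▸ (isWalk_iff.1 hp).1).left_of_append
  obtain _ | ⟨y, l⟩ := l
  · simp at hx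
  obtain ⟨rfl, -⟩ := List.cons.inj h
  exact (isChain_eraseEdge_iff.2 ⟨hl, he⟩).reflTransGen_of_mem rfl hx

theorem IsWalk.reaches_eraseEdge_of_suffix {p l r : List V} {e : V × V} {x : V}
    (hp : IsWalk E s t p) (h : s :: p = l ++ x :: r) (he : e ∉ (x :: r).consecutivePairs) :
    reaches (eraseEdge E e) x t := by
  rw [isWalk_iff, h] at hp
  refine List.relationReflTransGen_of_exists_isChain_cons r
    (isChain_eraseEdge_iff.2 ⟨hp.1.right_of_append, he⟩) ?_
  simpa [List.getLast?_eq_some_getLast] using hp.2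

theorem IsBridge.not_reaches_eraseEdge_snd_s16 {e : V × V} (he : IsBridge E s t e)
    (hst : reaches E s t) : ¬ reaches (eraseEdge E e) s e.2 := by
  obtain ⟨p, hp⟩ := exists_isWalk_of_reaches hst
  obtain ⟨L₁, L₂, hL₂, hL⟩ := List.exists_eq_append_cons_notMem_right (he.mem_edgesOf hp)
  obtain ⟨u, v, hsplit, -, rfl⟩ := List.exists_eq_append_cons_cons_of_consecutivePairs_eq hL
  have hsuffix := hp.reaches_eraseEdge_of_suffix (l := u ++ [e.1]) (by simp [hsplit]) hL₂
  exact fun h => he.2 (h.trans hsuffix)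

theorem IsWalk.splice {p l₁ r₁ l₂ r₂ : List V} {a : V} (hp : IsWalk E s t p)
    (h₁ : s :: p = l₁ ++ a :: r₁) (h₂ : s :: p = l₂ ++ a :: r₂) :
    ∃ q, s :: q = l₁ ++ a :: r₂ ∧ IsWalk E s t q := by
  obtain ⟨q, hq⟩ : ∃ q, s :: q = l₁ ++ a :: r₂ := by
    obtain _ | ⟨y, l₁⟩ := l₁ <;> obtain ⟨rfl, -⟩ := List.cons.inj h₁
    exacts [⟨r₂, rfl⟩, ⟨l₁ ++ a :: r₂, rfl⟩]
  rw [isWalk_iff] at hp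
  refine ⟨q, hq, isWalk_iff.2 ⟨?_, ?_⟩⟩
  · rw [hq]
    exact (h₁ ▸ hp.1).splice (h₂ ▸ hp.1)
  · rw [hq, List.getLast?_append]
    rw [h₂, List.getLast?_append] at hp
    simpa using hp.2

theorem IsWalk.notMem_prefix_of_forall_pair_sublist {b c : V × V} {p : List V}
    {P Q : List (V × V)} (hbc : b ≠ c)
    (horder : ∀ q, IsWalk E s t q → [b, c].Sublist (edgesOf s q)) (hp : IsWalk E s t p)
    (hsplit : edgesOf s p = P ++ b :: Q) (hbP : b ∉ P) : c ∉ P := by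
  intro hcP
  obtain ⟨P₁, P₂, hcP₁, rfl⟩ := List.exists_eq_append_cons_notMem_left hcP
  have hcQ : c ∈ Q := List.mem_of_pair_sublist_append_cons (hsplit ▸ horder p hp) hbP
  obtain ⟨Q₁, Q₂, hcQ₂, rfl⟩ := List.exists_eq_append_cons_notMem_right hcQ
  obtain ⟨u, _, hu, hP₁, -⟩ := List.exists_eq_append_cons_cons_of_consecutivePairs_eq
    (L₁ := P₁) (e := c) (L₂ := P₂ ++ b :: Q₁ ++ c :: Q₂) (hsplit.trans (by simp))
  obtain ⟨_, v, hv, -, hQ₂⟩ := List.exists_eq_append_cons_cons_of_consecutivePairs_eq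
    (L₁ := P₁ ++ c :: P₂ ++ b :: Q₁) (e := c) (L₂ := Q₂) (hsplit.trans (by simp))
  obtain ⟨q, hq, hwalk⟩ := hp.splice hu hv
  have hedges : edgesOf s q = P₁ ++ c :: Q₂ := by
    rw [edgesOf_eq_consecutivePairs, hq, List.consecutivePairs_append_cons_cons, hP₁, hQ₂]
  have hsub := (hedges ▸ horder q hwalk).of_sublist_append_right (l₁ := P₁) (by
    simp only [List.mem_cons, List.not_mem_nil, or_false, forall_eq_or_imp, forall_eq]
    exact ⟨fun h => hbP (List.mem_append_left _ h), hcP₁⟩)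
  rcases List.sublist_cons_iff.1 hsub with h | ⟨_, h, -⟩
  · exact hcQ₂ (h.subset (by simp))
  · exact hbc (List.cons.inj h).1

theorem rset_of_lt {i : ℕ} (hi : i < B.length) {v : V} :
    Rset E s B i v ↔ reaches (eraseEdge E B[i]) s v := by
  simp [Rset, hi]

theorem rset_length {v : V} : Rset E s B B.length v ↔ reaches E s v := by
  simp [Rset]

theorem comp_succ {i : ℕ} {v : V} :
    Comp E s B (i + 1) v ↔ Rset E s B (i + 1) v ∧ ¬ Rset E s B i v := by
  simp [Comp]

theorem comp_zero_self : Comp E s B 0 s := by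
  refine ⟨?_, Or.inl rfl⟩
  unfold Rset
  split <;> exact Relation.ReflTransGen.refl

theorem IsWalk.exists_split_comp_succ {p : List V} {i : ℕ} (hst : reaches E s t)
    (hnd : B.Nodup) (hB : ∀ e ∈ B, IsBridge E s t e)
    (horder : ∀ q, IsWalk E s t q → B.Sublist (edgesOf s q))
    (hp : IsWalk E s t p) (hi : i < B.length) :
    ∃ u v, s :: p = u ++ B[i].2 :: v ∧ (∀ x ∈ u, ¬ Comp E s B (i + 1) x) ∧
      Comp E s B (i + 1) B[i].2 := by
  set b := B[i]
  have hb : IsBridge E s t b := hB b (List.getElem_mem hi)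
  obtain ⟨P, Q, hbP, hPQ⟩ := List.exists_eq_append_cons_notMem_left (hb.mem_edgesOf hp)
  obtain ⟨u, v, hsplit, rfl, -⟩ := List.exists_eq_append_cons_cons_of_consecutivePairs_eq hPQ
  have hsplit' : s :: p = (u ++ [b.1]) ++ b.2 :: v := by simp [hsplit]
  have hbefore : ∀ x ∈ u ++ [b.1], ¬ Comp E s B (i + 1) x := fun x hx hx' =>
    (comp_succ.1 hx').2 ((rset_of_lt hi).2 (hp.reaches_eraseEdge_of_mem_prefix hsplit' hbP hx))
  have hnotR : ¬ Rset E s B i b.2 := fun h =>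
    hb.not_reaches_eraseEdge_snd_s16 hst ((rset_of_lt hi).1 h)
  have hR : Rset E s B (i + 1) b.2 := by
    rcases Nat.lt_or_ge (i + 1) B.length with hi' | hi'
    · have hbc : b ≠ B[i + 1] := fun h => by simpa using hnd.getElem_inj_iff.1 h
      have hcP := hp.notMem_prefix_of_forall_pair_sublist hbc
        (fun q hq => (List.getElem_pair_sublist hi').trans (horder q hq)) hPQ hbP
      rw [rset_of_lt hi']
      refine hp.reaches_eraseEdge_of_mem_prefix (l := u ++ [b.1, b.2]) (r := v)
        (by simp [hsplit]) ?_ (by simp)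
      rw [List.consecutivePairs_append_cons_cons]
      simp [hcP, Ne.symm hbc]
    · rw [show i + 1 = B.length by omega, rset_length]
      exact (isWalk_iff.1 hp).1.reflTransGen_of_mem rfl (by simp [hsplit])
  exact ⟨u ++ [b.1], v, hsplit', hbefore, comp_succ.2 ⟨hR, hnotR⟩⟩

def entryVertex (s : V) (B : List (V × V)) (i : ℕ) : V :=
  if i = 0 then s else (B.getD (i - 1) (s, s)).2

theorem IsWalk.exists_split_comp {p : List V} {i : ℕ} (hst : reaches E s t)
    (hnd : B.Nodup) (hB : ∀ e ∈ B, IsBridge E s t e)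
    (horder : ∀ q, IsWalk E s t q → B.Sublist (edgesOf s q))
    (hp : IsWalk E s t p) (hi : i ≤ B.length) :
    ∃ u v, s :: p = u ++ entryVertex s B i :: v ∧ (∀ x ∈ u, ¬ Comp E s B i x) ∧
      Comp E s B i (entryVertex s B i) := by
  cases i with
  | zero => exact ⟨[], p, rfl, by simp, comp_zero_self⟩
  | succ i =>
    simp only [entryVertex, Nat.add_one_ne_zero, if_false, Nat.add_sub_cancel,
      List.getD_eq_getElem _ _ hi]
    exact hp.exists_split_comp_succ hst hnd hB horder hi

end

/-- every s-t path enters bridge component C_i at head(b_{i-1})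
(or at s for the first component). -/
theorem stmt16 (E : V → V → Prop) (s t : V) (hst : reaches E s t)
    (B : List (V × V)) (hnd : B.Nodup)
    (hB : ∀ e : V × V, IsBridge E s t e ↔ e ∈ B)
    (horder : ∀ p : List V, IsWalk E s t p → B.Sublist (edgesOf s p)) :
    ∀ p : List V, IsWalk E s t p → ∀ i ≤ B.length,
      ∀ j : ℕ, (hj : j < (s :: p).length) →
        Comp E s B i ((s :: p).get ⟨j, hj⟩) →
        (∀ j' : ℕ, (hj' : j' < j) → ¬ Comp E s B i ((s :: p).get ⟨j', lt_trans hj' hj⟩)) →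
        (s :: p).get ⟨j, hj⟩ = (if i = 0 then s else (B.getD (i - 1) (s, s)).2) := by
  intro p hp i hi j hj hcomp hmin
  obtain ⟨u, v, hsplit, hu, hentry⟩ :=
    hp.exists_split_comp hst hnd (fun e => (hB e).2) horder hi
  simp only [List.get_eq_getElem] at hcomp hmin ⊢
  exact List.getElem_eq_of_eq_append_cons_of_first hsplit hu hentry hj hcomp hmin
end
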